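/- Let p be prime, N a positive integer, and let f : ℤ^N → ℤ be given by a finite binomial expansion f(x̄) = ∑_{n̄ ∈ T} C(x_1,n_1)⋯C(x_N,n_N) c(n̄) where T ⊆ ℕ^N is a finite set with |n̄| := n_1+⋯+n_N ≤ D for all n̄ ∈ T and c : T → ℤ. Then for any positive integers α_1 ≥ ⋯ ≥ α_N, the p-adic valuation of ∑_{x̄ ∈ ∏_i {0,…,p^{α_i}−1}} f(x̄) is at least V_p(ᾱ, D) := min{∑_{i=1}^N ν_p(α_i, n_i) : n̄ ∈ ℕ^N, |n̄| ≤ D}, where ν_p(α, n) = α − ord_p(n+1) if n ≤ p^α − 1 and ∞ otherwise. -/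

import Mathlib

/-!
Expanding `f` in the binomial basis and summing coordinate by coordinate, the hockey-stick
identity turns the box sum into `∑ n ∈ T, (∏ i, C(p ^ α i, n i + 1)) * c n`. By Kummer's theorem
`ord_p C(p ^ a, k + 1) = a - ord_p (k + 1)` when `k + 1 ≤ p ^ a`, and the coefficient vanishes
otherwise; this is exactly `ν_p(a, k)`. So every term has valuation at least `∑ i, ν_p(α i, n i)`,
which is at least `V_p(α, D)` because `|n| ≤ D`, and the valuation of the sum is at least the
minimum over its terms.
-/

open Finset

theorem sum_range_choose_eq_choose_succ (k m : ℕ) :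
    ∑ x ∈ range m, x.choose k = m.choose (k + 1) := by
  induction m with
  | zero => simp
  | succ m ih => rw [sum_range_succ, ih, Nat.choose_succ_succ', add_comm]

theorem sum_piFinset_range_prod_ringChoose {ι : Type*} [Fintype ι] [DecidableEq ι]
    (m n : ι → ℕ) :
    ∑ x ∈ Fintype.piFinset (fun i => range (m i)), ∏ i, Ring.choose (x i : ℤ) (n i)
      = ∏ i, ((m i).choose (n i + 1) : ℤ) := by
  rw [← prod_univ_sum (fun i => range (m i)) (fun i x => Ring.choose (x : ℤ) (n i))]
  refine prod_congr rfl fun i _ => ?_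
  simp only [Ring.choose_natCast, ← Nat.cast_sum, sum_range_choose_eq_choose_succ]

theorem emultiplicity_choose_prime_pow_succ {p : ℕ} (hp : p.Prime) (a k : ℕ) :
    emultiplicity (p : ℤ) ((p ^ a).choose (k + 1) : ℤ)
      = if k ≤ p ^ a - 1 then ((a - padicValNat p (k + 1) : ℕ) : ℕ∞) else ⊤ := by
  rw [Int.natCast_emultiplicity]
  split_ifs with hk
  · have hk' : k + 1 ≤ p ^ a := (Nat.le_sub_one_iff_lt (pow_pos hp.pos a)).mp hk
    rw [hp.emultiplicity_choose_prime_pow hk' k.succ_ne_zero,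
      padicValNat_def' hp.ne_one k.succ_ne_zero]
  · rw [Nat.choose_eq_zero_of_lt (by omega), emultiplicity_zero]

theorem stmt_19_general (p : ℕ) (hp : p.Prime) (N : ℕ) (D : ℕ)
    (T : Finset (Fin N → ℕ)) (hT : ∀ n ∈ T, ∑ i, n i ≤ D)
    (c : (Fin N → ℕ) → ℤ)
    (f : (Fin N → ℤ) → ℤ)
    (hf : ∀ x : Fin N → ℤ,
      f x = ∑ n ∈ T, (∏ i, Ring.choose (x i) (n i)) * c n)
    (α : Fin N → ℕ)
    (νp : ℕ → ℕ → ℕ∞)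
    (hν : ∀ a n : ℕ, νp a n
      = if n ≤ p ^ a - 1 then ((a - padicValNat p (n + 1) : ℕ) : ℕ∞) else ⊤) :
    sInf {v : ℕ∞ | ∃ n : Fin N → ℕ, ∑ i, n i ≤ D ∧ v = ∑ i, νp (α i) (n i)}
      ≤ emultiplicity (p : ℤ)
          (∑ x ∈ Fintype.piFinset (fun i : Fin N => Finset.range (p ^ α i)),
            f (fun i => (x i : ℤ))) := by
  have hpZ : Prime (p : ℤ) := Nat.prime_iff_prime_int.mp hp
  have hsum : ∑ x ∈ Fintype.piFinset (fun i : Fin N => range (p ^ α i)), f (fun i => (x i : ℤ))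
      = ∑ n ∈ T, (∏ i, ((p ^ α i).choose (n i + 1) : ℤ)) * c n := by
    simp only [hf]
    rw [sum_comm]
    simp only [← sum_mul, sum_piFinset_range_prod_ringChoose]
  rw [hsum, ← multiplicity_addValuation_apply (hp := hpZ)]
  refine AddValuation.map_le_sum _ fun n hn => ?_
  refine le_trans (sInf_le ⟨n, hT n hn, rfl⟩) ?_
  calc ∑ i, νp (α i) (n i)
      _ = emultiplicity (p : ℤ) (∏ i, ((p ^ α i).choose (n i + 1) : ℤ)) := by
        simp only [Finset.emultiplicity_prod hpZ, emultiplicity_choose_prime_pow_succ hp, hν]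
      _ ≤ _ := by rw [multiplicity_addValuation_apply, emultiplicity_mul hpZ]; exact le_self_add

theorem stmt_19 (p : ℕ) (hp : p.Prime) (N : ℕ) (hN : 0 < N) (D : ℕ)
    (T : Finset (Fin N → ℕ)) (hT : ∀ n ∈ T, ∑ i, n i ≤ D)
    (c : (Fin N → ℕ) → ℤ)
    (f : (Fin N → ℤ) → ℤ)
    (hf : ∀ x : Fin N → ℤ,
      f x = ∑ n ∈ T, (∏ i, Ring.choose (x i) (n i)) * c n)
    (α : Fin N → ℕ) (hpos : ∀ i, 0 < α i)
    (hmono : ∀ i j : Fin N, i ≤ j → α j ≤ α i)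
    (νp : ℕ → ℕ → ℕ∞)
    (hν : ∀ a n : ℕ, νp a n
      = if n ≤ p ^ a - 1 then ((a - padicValNat p (n + 1) : ℕ) : ℕ∞) else ⊤) :
    sInf {v : ℕ∞ | ∃ n : Fin N → ℕ, ∑ i, n i ≤ D ∧ v = ∑ i, νp (α i) (n i)}
      ≤ emultiplicity (p : ℤ)
          (∑ x ∈ Fintype.piFinset (fun i : Fin N => Finset.range (p ^ α i)),
            f (fun i => (x i : ℤ))) :=
  stmt_19_general p hp N D T hT c f hf α νp hν
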